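/- Let R be a ring such that every automorphism of the category C_R of finitely generated free left R-modules is equinumerous (i.e., φ(F) ≅ F for every object F). Then every automorphism of C_R is semi-inner. -/

import Mathlib

/-! A semi-inner structure on an autoequivalence `Φ` of `C_R` is forced by any isomorphism
`e : Φ(R) ≅ R`. Every `F` is identified with `Hom(R, F)` by evaluation at `1`, and `Φ` is an
additive bijection `Hom(R, F) ≃ Hom(Φ R, Φ F)` (additive because an equivalence preserves
biproducts); precomposing with `e⁻¹` and evaluating at `1` again gives `s_F : F ≃+ Φ(F)`,
natural in `F`. Since `r • a` is the image of `r` under `R → F, x ↦ x • a`, naturality makes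
`s_F` semilinear for the ring automorphism `σ r = e (s_R r)` of `R`. -/

open CategoryTheory

/-- The category `C_R`: the full subcategory of the category of left `R`-modules whose
objects are the finitely generated free left `R`-modules. -/
def CR (R : Type) [Ring R] : Type 1 :=
  ObjectProperty.FullSubcategory (fun M : ModuleCat.{0} R => Module.Finite R M ∧ Module.Free R M)

instance (R : Type) [Ring R] : Category (CR R) :=
  ObjectProperty.FullSubcategory.category _

/-- A morphism of `C_R` is just an `R`-linear map. -/
def homToLin {R : Type} [Ring R] {F G : CR R} (f : F ⟶ G) : F.obj →ₗ[R] G.obj := f.hom.hom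

/-- An automorphism `φ` of the category `C_R` is *semi-inner* if there are a ring
automorphism `σ` of `R` and additive isomorphisms `s_F : F ≃+ φ(F)`, one for each object
`F` of `C_R`, with `s_F (r • a) = σ r • s_F a`, such that `φ(f) ∘ s_F = s_G ∘ f` for
every `R`-linear map `f : F ⟶ G`. -/
def SemiInner (R : Type) [Ring R] (φ : Aut (Cat.of (CR R))) : Prop :=
  ∃ (σ : R ≃+* R)
    (s : ∀ F : CR R, F.obj ≃+ ((φ.hom.toFunctor : CR R ⥤ CR R).obj F).obj),
    (∀ (F : CR R) (r : R) (a : F.obj), s F (r • a) = σ r • s F a) ∧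
    (∀ (F G : CR R) (f : F ⟶ G) (a : F.obj),
      homToLin ((φ.hom.toFunctor : CR R ⥤ CR R).map f) (s F a) = s G (homToLin f a))

namespace CategoryTheory

variable {C D : Type*} [Category* C] [Category* D] [Preadditive C] [Preadditive D]

noncomputable def Functor.mapAddEquiv (Φ : C ⥤ D) [Φ.Full] [Φ.Faithful] [Φ.Additive]
    (X Y : C) : (X ⟶ Y) ≃+ (Φ.obj X ⟶ Φ.obj Y) :=
  AddEquiv.mk' (Functor.FullyFaithful.ofFullyFaithful Φ).homEquiv fun _ _ => Φ.map_add

def Iso.precompAddEquiv {X X' : C} (e : X ≅ X') (Y : C) : (X ⟶ Y) ≃+ (X' ⟶ Y) where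
  toFun f := e.inv ≫ f
  invFun g := e.hom ≫ g
  left_inv _ := e.hom_inv_id_assoc _
  right_inv _ := e.inv_hom_id_assoc _
  map_add' _ _ := Preadditive.comp_add _ _ _ _ _ _

end CategoryTheory

open CategoryTheory.Limits

namespace CR

variable {R : Type} [Ring R]

noncomputable instance : Preadditive (CR R) :=
  Preadditive.fullSubcategory _

def ofHom {F G : CR R} (f : F.obj →ₗ[R] G.obj) : F ⟶ G :=
  ObjectProperty.homMk (ModuleCat.ofHom f)

lemma hom_ext {F G : CR R} {f g : F ⟶ G} (h : ∀ a, homToLin f a = homToLin g a) : f = g :=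
  ObjectProperty.hom_ext _ (ModuleCat.hom_ext (LinearMap.ext h))

def prod (F G : CR R) : CR R :=
  have := F.property.1; have := F.property.2; have := G.property.1; have := G.property.2
  ⟨ModuleCat.of R (F.obj × G.obj), inferInstance, inferInstance⟩

noncomputable instance : HasBinaryBiproducts (CR R) where
  has_binary_biproduct F G := HasBinaryBiproduct.mk
    { bicone :=
        { pt := prod F G
          fst := ofHom (LinearMap.fst R F.obj G.obj)
          snd := ofHom (LinearMap.snd R F.obj G.obj)
          inl := ofHom (LinearMap.inl R F.obj G.obj)
          inr := ofHom (LinearMap.inr R F.obj G.obj) }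
      isBilimit := isBinaryBilimitOfTotal _ (hom_ext fun a => by
        rcases a with ⟨x, y⟩
        exact Prod.ext (add_zero x) (zero_add y)) }

variable (R) in
abbrev unit : CR R :=
  ⟨ModuleCat.of R R, inferInstance, inferInstance⟩

lemma hom_ext_unit {F : CR R} {f g : unit R ⟶ F}
    (h : homToLin f (1 : R) = homToLin g (1 : R)) : f = g :=
  ObjectProperty.hom_ext _ (ModuleCat.hom_ext (LinearMap.ext_ring h))

def homUnitEquiv (F : CR R) : (unit R ⟶ F) ≃+ F.obj where
  toFun f := homToLin f (1 : R)
  invFun a := ofHom (LinearMap.toSpanSingleton R F.obj a)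
  left_inv _ := hom_ext_unit (one_smul R _)
  right_inv := one_smul R
  map_add' _ _ := rfl

lemma homUnitEquiv_symm_comp {F G : CR R} (a : F.obj) (f : F ⟶ G) :
    (homUnitEquiv F).symm a ≫ f = (homUnitEquiv G).symm (homToLin f a) :=
  hom_ext_unit ((congrArg (homToLin f) (one_smul R a)).trans (one_smul R _).symm)

section SemiInner

variable (Φ : CR R ⥤ CR R) [Φ.Full] [Φ.Faithful] [Φ.Additive] (e : Φ.obj (unit R) ≅ unit R)

noncomputable def semiInnerEquiv (F : CR R) : F.obj ≃+ (Φ.obj F).obj :=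
  (homUnitEquiv F).symm.trans <| (Φ.mapAddEquiv _ _).trans <|
    (e.precompAddEquiv _).trans (homUnitEquiv (Φ.obj F))

lemma semiInnerEquiv_apply (F : CR R) (a : F.obj) :
    semiInnerEquiv Φ e F a =
      homToLin (Φ.map ((homUnitEquiv F).symm a)) (homToLin e.inv (1 : R)) :=
  rfl

lemma map_semiInnerEquiv {F G : CR R} (f : F ⟶ G) (a : F.obj) :
    homToLin (Φ.map f) (semiInnerEquiv Φ e F a) = semiInnerEquiv Φ e G (homToLin f a) := by
  rw [semiInnerEquiv_apply, semiInnerEquiv_apply, ← homUnitEquiv_symm_comp, Φ.map_comp]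
  rfl

lemma semiInnerEquiv_unit_eq_smul (r : R) :
    semiInnerEquiv Φ e (unit R) r =
      homToLin e.hom (semiInnerEquiv Φ e (unit R) r) • homToLin e.inv (1 : R) := by
  rw [← map_smul, smul_eq_mul, mul_one]
  exact (congrArg (fun f => homToLin f _) e.hom_inv_id).symm

lemma semiInnerEquiv_smul (F : CR R) (r : R) (a : F.obj) :
    semiInnerEquiv Φ e F (r • a) =
      homToLin e.hom (semiInnerEquiv Φ e (unit R) r) • semiInnerEquiv Φ e F a := by
  have h : homToLin ((homUnitEquiv F).symm a) r = r • a := rfl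
  conv_lhs => rw [← h, ← map_semiInnerEquiv, semiInnerEquiv_unit_eq_smul, map_smul]
  rfl

noncomputable def semiInnerRingEquiv : R ≃+* R :=
  { (semiInnerEquiv Φ e (unit R)).trans
      ((ObjectProperty.ι _).mapIso e).toLinearEquiv.toAddEquiv with
    map_mul' r s := by
      change homToLin e.hom (semiInnerEquiv Φ e (unit R) (r • s)) = _
      rw [semiInnerEquiv_smul, map_smul]
      rfl }

end SemiInner

theorem semiInner_of_iso_unit (φ : Aut (Cat.of (CR R)))
    (e : (φ.hom.toFunctor : CR R ⥤ CR R).obj (unit R) ≅ unit R) : SemiInner R φ := by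
  let E : CR R ≌ CR R := Cat.equivOfIso φ
  have : E.functor.Additive := E.functor.additive_of_preserves_binary_products
  exact ⟨semiInnerRingEquiv E.functor e, semiInnerEquiv E.functor e,
    semiInnerEquiv_smul E.functor e, fun _ _ => map_semiInnerEquiv E.functor e⟩

end CR

/-- if every automorphism of the category `C_R` of finitely generated free
left `R`-modules is equinumerous (`φ(F) ≅ F` for every object `F`), then every
automorphism of `C_R` is semi-inner. -/
theorem stmt12 (R : Type) [Ring R]
    (hEqn : ∀ (φ : Aut (Cat.of (CR R))) (F : CR R),
      Nonempty ((φ.hom.toFunctor : CR R ⥤ CR R).obj F ≅ F))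
    (φ : Aut (Cat.of (CR R))) :
    SemiInner R φ :=
  let ⟨e⟩ := hEqn φ (CR.unit R)
  CR.semiInner_of_iso_unit φ e
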